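/- arXiv:2501.06376 — 3 statements merged into one kernel-verified Lean document; each statement's English description precedes it below -/
import Mathlib

section
/- Let R be a nonempty bounded subset of ℝ^n with diameter D (in the Euclidean norm). Then the Chebyshev radius of R, i.e. inf_{x ∈ ℝ^n} sup_{r ∈ R} ‖x - r‖₂, is at most sqrt(n/(2(n+1))) · D. -/
open Finset Metric Set Filter Topology Module

open scoped RealInnerProductSpace

/-! By Helly's theorem it suffices to treat at most `n + 1` points. For a finite set `S`, let `x`
be the center of a smallest ball containing `S`, of radius `ρ`. Minimality forces `x` into the
convex hull of the points at distance exactly `ρ` (otherwise moving `x` towards that hull brings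
it strictly closer to all of them), so `x = ∑ wₛ s` with weights `wₛ ≥ 0` summing to `1`. The
identity `∑ₛ ∑ₜ wₛ wₜ ‖s - t‖² = 2 ∑ₛ wₛ ‖s - x‖² = 2ρ²` then bounds `2ρ²` by
`D² (1 - ∑ wₛ²) ≤ D² n / (n + 1)`, using Cauchy–Schwarz for the weights. -/

theorem Finset.exists_forall_dist_le_and_forall_exists_le_dist {α : Type*} [PseudoMetricSpace α]
    [ProperSpace α] {S : Finset α} (hS : S.Nonempty) :
    ∃ x ρ, (∀ s ∈ S, dist x s ≤ ρ) ∧ ∀ y, ∃ s ∈ S, ρ ≤ dist y s := by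
  obtain ⟨s₀, hs₀⟩ := hS
  have : Nonempty α := ⟨s₀⟩
  set f : α → ℝ := fun x => S.sup' ⟨s₀, hs₀⟩ (dist x ·)
  have hf : Continuous f :=
    Continuous.finset_sup'_apply _ fun s _ => continuous_id.dist continuous_const
  have hcoercive : Tendsto f (cocompact α) atTop :=
    tendsto_atTop_mono (fun x => Finset.le_sup' (dist x ·) hs₀)
      (tendsto_dist_right_cocompact_atTop s₀)
  obtain ⟨x, hx⟩ := hf.exists_forall_le hcoercive
  refine ⟨x, f x, fun s hs => Finset.le_sup' (dist x ·) hs, fun y => ?_⟩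
  obtain ⟨s, hs, hys⟩ := S.exists_mem_eq_sup' ⟨s₀, hs₀⟩ (dist y ·)
  exact ⟨s, hs, hys ▸ hx y⟩

theorem sum_sum_mul_norm_sub_sq_le {E : Type*} [SeminormedAddCommGroup E] {T : Finset E}
    {w : E → ℝ} (hw₀ : ∀ s ∈ T, 0 ≤ w s) (hw : ∑ s ∈ T, w s = 1) {D : ℝ}
    (hD : ∀ s ∈ T, ∀ t ∈ T, dist s t ≤ D) :
    ∑ s ∈ T, ∑ t ∈ T, w s * w t * ‖s - t‖ ^ 2 ≤ D ^ 2 * (1 - ∑ s ∈ T, w s ^ 2) := by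
  classical
  have hpair : ∀ s ∈ T, ∀ t ∈ T,
      w s * w t * ‖s - t‖ ^ 2 ≤ D ^ 2 * (w s * w t) - D ^ 2 * (if s = t then w s * w t else 0) := by
    intro s hs t ht
    split_ifs with hst
    · simp [hst]
    · rw [mul_zero, sub_zero, mul_comm (D ^ 2)]
      have hst' : ‖s - t‖ ≤ D := dist_eq_norm s t ▸ hD s hs t ht
      exact mul_le_mul_of_nonneg_left (pow_le_pow_left₀ (norm_nonneg _) hst' 2)
        (mul_nonneg (hw₀ s hs) (hw₀ t ht))
  calc ∑ s ∈ T, ∑ t ∈ T, w s * w t * ‖s - t‖ ^ 2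
      ≤ ∑ s ∈ T, ∑ t ∈ T, (D ^ 2 * (w s * w t) - D ^ 2 * (if s = t then w s * w t else 0)) :=
        Finset.sum_le_sum fun s hs => Finset.sum_le_sum fun t ht => hpair s hs t ht
    _ = D ^ 2 * (1 - ∑ s ∈ T, w s ^ 2) := by
        simp only [Finset.sum_sub_distrib, ← Finset.mul_sum, ← Finset.sum_mul, Finset.sum_ite_eq,
          hw]
        rw [Finset.sum_congr rfl fun s hs => if_pos hs]
        simp only [sq, mul_one]
        ring

variable {E : Type*} [NormedAddCommGroup E] [InnerProductSpace ℝ E]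

theorem sum_sum_mul_norm_sub_sq_eq {T : Finset E} {w : E → ℝ} (hw : ∑ s ∈ T, w s = 1) :
    ∑ s ∈ T, ∑ t ∈ T, w s * w t * ‖s - t‖ ^ 2 =
      2 * ∑ s ∈ T, w s * ‖s - ∑ t ∈ T, w t • t‖ ^ 2 := by
  set c := ∑ t ∈ T, w t • t
  have hbalance : ∑ s ∈ T, w s • (s - c) = 0 := by
    simp only [smul_sub, Finset.sum_sub_distrib, ← Finset.sum_smul, hw, one_smul, c, sub_self]
  have hcross : ∑ s ∈ T, ∑ t ∈ T, w s * w t * ⟪s - c, t - c⟫ = 0 := by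
    have := congrArg (fun v => ⟪v, v⟫) hbalance
    simp only [sum_inner, inner_sum, real_inner_smul_left, real_inner_smul_right,
      inner_zero_left] at this
    rw [← this]
    refine Finset.sum_congr rfl fun s _ => Finset.sum_congr rfl fun t _ => ?_
    rw [real_inner_comm]
    ring
  calc ∑ s ∈ T, ∑ t ∈ T, w s * w t * ‖s - t‖ ^ 2
      = ∑ s ∈ T, ∑ t ∈ T, (w t * (w s * ‖s - c‖ ^ 2) + w s * (w t * ‖t - c‖ ^ 2)
          - 2 * (w s * w t * ⟪s - c, t - c⟫)) := by
        refine Finset.sum_congr rfl fun s _ => Finset.sum_congr rfl fun t _ => ?_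
        rw [← sub_sub_sub_cancel_right s t c, norm_sub_sq_real]
        ring
    _ = 2 * ∑ s ∈ T, w s * ‖s - c‖ ^ 2 := by
        simp only [Finset.sum_sub_distrib, Finset.sum_add_distrib, ← Finset.mul_sum,
          ← Finset.sum_mul, hw, hcross]
        ring

theorem sq_le_of_mem_convexHull_of_forall_dist_eq {T : Finset E} {m : ℕ} (hT : #T ≤ m + 1)
    {x : E} (hx : x ∈ convexHull ℝ (T : Set E)) {ρ D : ℝ} (hρ : ∀ t ∈ T, dist t x = ρ)
    (hD : ∀ s ∈ T, ∀ t ∈ T, dist s t ≤ D) :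
    ρ ^ 2 ≤ m / (2 * (m + 1)) * D ^ 2 := by
  obtain ⟨w, hw₀, hw, rfl⟩ := Finset.mem_convexHull'.1 hx
  have h2ρ : 2 * ρ ^ 2 ≤ D ^ 2 * (1 - ∑ s ∈ T, w s ^ 2) := by
    calc 2 * ρ ^ 2 = 2 * ∑ s ∈ T, w s * ‖s - ∑ t ∈ T, w t • t‖ ^ 2 := by
          rw [Finset.sum_congr rfl fun s hs => by rw [← dist_eq_norm, hρ s hs], ← Finset.sum_mul,
            hw]
          ring
      _ = ∑ s ∈ T, ∑ t ∈ T, w s * w t * ‖s - t‖ ^ 2 := (sum_sum_mul_norm_sub_sq_eq hw).symm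
      _ ≤ _ := sum_sum_mul_norm_sub_sq_le hw₀ hw hD
  have hsq : 1 ≤ (m + 1 : ℝ) * ∑ s ∈ T, w s ^ 2 :=
    calc 1 = (∑ s ∈ T, w s) ^ 2 := by rw [hw, one_pow]
      _ ≤ #T * ∑ s ∈ T, w s ^ 2 := sq_sum_le_card_mul_sum_sq
      _ ≤ (m + 1 : ℝ) * ∑ s ∈ T, w s ^ 2 := by gcongr; exact_mod_cast hT
  rw [div_mul_eq_mul_div, le_div_iff₀ (by positivity)]
  nlinarith [mul_le_mul_of_nonneg_left hsq (sq_nonneg D)]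

theorem dist_add_smul_sq (x v s : E) (ε : ℝ) :
    dist (x + ε • v) s ^ 2 = dist x s ^ 2 - 2 * ε * ⟪v, s - x⟫ + ε ^ 2 * ‖v‖ ^ 2 := by
  rw [dist_eq_norm, dist_eq_norm, show x + ε • v - s = ε • v - (s - x) by abel,
    norm_sub_sq_real, norm_smul, real_inner_smul_left, norm_sub_rev, Real.norm_eq_abs, mul_pow,
    sq_abs]
  ring

theorem eventually_dist_add_smul_lt {x v s : E} {ρ : ℝ} (hs : dist x s ≤ ρ)
    (hv : dist x s = ρ → 0 < ⟪v, s - x⟫) : ∀ᶠ ε in 𝓝[>] (0 : ℝ), dist (x + ε • v) s < ρ := by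
  rcases hs.lt_or_eq with hlt | heq
  · have hcont : Continuous fun ε : ℝ => dist (x + ε • v) s := by fun_prop
    refine nhdsWithin_le_nhds (hcont.continuousAt.eventually_lt continuousAt_const ?_)
    simpa using hlt
  · have ha := hv heq
    have hsmall : ∀ᶠ ε in 𝓝 (0 : ℝ), ε * ‖v‖ ^ 2 < 2 * ⟪v, s - x⟫ := by
      refine (continuous_id.mul continuous_const).continuousAt.eventually_lt continuousAt_const ?_
      simpa using ha
    filter_upwards [self_mem_nhdsWithin, nhdsWithin_le_nhds hsmall] with ε (hε : 0 < ε) hεv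
    have hsq : dist (x + ε • v) s ^ 2 < ρ ^ 2 := by
      rw [dist_add_smul_sq, heq]
      nlinarith
    exact lt_of_pow_lt_pow_left₀ 2 (heq ▸ dist_nonneg) hsq

theorem exists_dist_eq_and_inner_nonpos {S : Finset E} {x : E} {ρ : ℝ}
    (hx : ∀ s ∈ S, dist x s ≤ ρ) (hmin : ∀ y, ∃ s ∈ S, ρ ≤ dist y s) (v : E) :
    ∃ s ∈ S, dist x s = ρ ∧ ⟪v, s - x⟫ ≤ 0 := by
  by_contra! h
  have hmove : ∀ᶠ ε in 𝓝[>] (0 : ℝ), ∀ s ∈ S, dist (x + ε • v) s < ρ :=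
    (eventually_all_finset S).2 fun s hs => eventually_dist_add_smul_lt (hx s hs) (h s hs)
  obtain ⟨ε, hε⟩ := hmove.exists
  obtain ⟨s, hs, hρ⟩ := hmin (x + ε • v)
  exact (hε s hs).not_ge hρ

theorem mem_of_forall_exists_inner_nonpos {K : Set E} (hKc : IsComplete K) (hK : Convex ℝ K)
    {x : E} (h : ∀ v : E, ∃ w ∈ K, ⟪v, w - x⟫ ≤ 0) : x ∈ K := by
  -- the hypothesis for `v = y - x`, with `y` the projection of `x` onto `K`, forces `y = x`
  obtain ⟨y, hyK, hy⟩ := exists_norm_eq_iInf_of_complete_convex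
    (let ⟨w, hw, _⟩ := h 0; ⟨w, hw⟩) hKc hK x
  have hproj := (norm_eq_iInf_iff_real_inner_le_zero hK hyK).1 hy
  obtain ⟨w, hwK, hw⟩ := h (y - x)
  have hsplit : ⟪y - x, w - x⟫ = ‖y - x‖ ^ 2 - ⟪x - y, w - y⟫ := by
    rw [← real_inner_self_eq_norm_sq, ← neg_sub y x, inner_neg_left, sub_neg_eq_add,
      ← inner_add_right]
    congr 1; abel
  have : ‖y - x‖ ^ 2 ≤ 0 := by linarith [hproj w hwK]
  rw [sq_nonpos_iff, norm_eq_zero, sub_eq_zero] at this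
  exact this ▸ hyK

theorem Finset.exists_forall_dist_le_sqrt_mul_of_card_le [ProperSpace E] {S : Finset E} {m : ℕ}
    (hcard : #S ≤ m + 1) {D : ℝ} (hD : ∀ s ∈ S, ∀ t ∈ S, dist s t ≤ D) :
    ∃ x, ∀ s ∈ S, dist x s ≤ √(m / (2 * (m + 1))) * D := by
  rcases S.eq_empty_or_nonempty with rfl | hS
  · exact ⟨0, by simp⟩
  obtain ⟨x, ρ, hx, hmin⟩ := S.exists_forall_dist_le_and_forall_exists_le_dist hS
  set T := S.filter (dist x · = ρ)
  have hxT : x ∈ convexHull ℝ (T : Set E) := by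
    refine mem_of_forall_exists_inner_nonpos (T.finite_toSet.isCompact_convexHull ℝ).isComplete
      (convex_convexHull ℝ _) fun v => ?_
    obtain ⟨t, ht, htρ, hv⟩ := exists_dist_eq_and_inner_nonpos hx hmin v
    exact ⟨t, subset_convexHull ℝ _ (mem_filter.2 ⟨ht, htρ⟩), hv⟩
  have hρ : ρ ^ 2 ≤ m / (2 * (m + 1)) * D ^ 2 :=
    sq_le_of_mem_convexHull_of_forall_dist_eq ((card_filter_le _ _).trans hcard) hxT
      (fun t ht => (dist_comm t x).trans (mem_filter.1 ht).2)
      (fun s hs t ht => hD s (mem_of_mem_filter s hs) t (mem_of_mem_filter t ht))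
  have hD₀ : 0 ≤ D := hS.elim fun s hs => (dist_self s).symm.trans_le (hD s hs s hs)
  refine ⟨x, fun s hs => (hx s hs).trans ?_⟩
  rw [← Real.sqrt_sq hD₀, ← Real.sqrt_mul (by positivity)]
  exact (le_abs_self ρ).trans (Real.abs_le_sqrt hρ)

theorem exists_forall_dist_le_sqrt_mul_diam [FiniteDimensional ℝ E] {R : Set E}
    (hR : Bornology.IsBounded R) :
    ∃ x, ∀ r ∈ R, dist x r ≤ √(finrank ℝ E / (2 * (finrank ℝ E + 1))) * diam R := by
  classical
  obtain ⟨x, hx⟩ : (⋂ r : R, closedBall (r : E)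
      (√(finrank ℝ E / (2 * (finrank ℝ E + 1))) * diam R)).Nonempty := by
    refine Convex.helly_theorem_compact' (𝕜 := ℝ) (fun _ => convex_closedBall _ _)
      (fun _ => isCompact_closedBall _ _) fun I hI => ?_
    obtain ⟨x, hx⟩ := (I.image ((↑) : R → E)).exists_forall_dist_le_sqrt_mul_of_card_le
      (card_image_le.trans hI) (D := diam R) (by
        simp only [Finset.mem_image]
        rintro _ ⟨r, -, rfl⟩ _ ⟨r', -, rfl⟩
        exact dist_le_diam_of_mem hR r.2 r'.2)
    exact ⟨x, mem_iInter₂.2 fun r hr => mem_closedBall.2 (hx r (mem_image_of_mem _ hr))⟩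
  exact ⟨x, fun r hr => mem_closedBall.1 (mem_iInter.1 hx ⟨r, hr⟩)⟩

/-- Jung's theorem: for a nonempty bounded `R ⊆ ℝ^n` with Euclidean diameter `D`, the
Chebyshev radius `inf_x sup_{r ∈ R} ‖x - r‖₂` is at most `√(n / (2(n+1))) · D`. -/
theorem stmt_3 {n : ℕ} (R : Set (EuclideanSpace ℝ (Fin n)))
    (hR : R.Nonempty) (hbdd : Bornology.IsBounded R) :
    sInf {t : ℝ | ∃ x : EuclideanSpace ℝ (Fin n), ∀ r ∈ R, dist x r ≤ t} ≤
      Real.sqrt ((n : ℝ) / (2 * ((n : ℝ) + 1))) * Metric.diam R := by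
  obtain ⟨x, hx⟩ := exists_forall_dist_le_sqrt_mul_diam hbdd
  rw [finrank_euclideanSpace_fin] at hx
  obtain ⟨r, hr⟩ := hR
  exact csInf_le ⟨0, fun t ⟨y, hy⟩ => dist_nonneg.trans (hy r hr)⟩ ⟨x, hx⟩
end

section
/- Let R be the convex hull in ℝ³ of the four points (1,1,1), (-1,1,1), (1,-1,1), (1,1,-1). Then the point (0,0,0) satisfies sup_{r ∈ R} ‖(0,0,0) - r‖_∞ ≤ sup_{r ∈ R} ‖x - r‖_∞ for all x ∈ ℝ³ (i.e., it is a Chebyshev center in the sup-norm), and (0,0,0) does not belong to R. -/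
/-- For `R` the convex hull of `(1,1,1), (-1,1,1), (1,-1,1), (1,1,-1)` in `ℝ³` with the
sup norm, the origin is a Chebyshev center of `R` but does not belong to `R`. -/
theorem stmt_4
    (R : Set (Fin 3 → ℝ))
    (hR : R = convexHull ℝ
      ({![1,1,1], ![-1,1,1], ![1,-1,1], ![1,1,-1]} : Set (Fin 3 → ℝ))) :
    (∀ x : Fin 3 → ℝ,
        sSup ((fun r => ‖(0 : Fin 3 → ℝ) - r‖) '' R) ≤ sSup ((fun r => ‖x - r‖) '' R)) ∧
      (0 : Fin 3 → ℝ) ∉ R := by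
  set a : Fin 3 → ℝ := ![1,1,1] with ha_def
  set b : Fin 3 → ℝ := ![-1,1,1] with hb_def
  have ha : a ∈ R := hR ▸ subset_convexHull ℝ _ (by simp)
  have hb : b ∈ R := hR ▸ subset_convexHull ℝ _ (by simp)
  -- every point of R has sup-norm ≤ 1
  have hnorm : ∀ r ∈ R, ‖r‖ ≤ 1 := by
    intro r hr
    have hsub : R ⊆ Metric.closedBall (0 : Fin 3 → ℝ) 1 := by
      rw [hR]
      apply convexHull_min _ (convex_closedBall _ _)
      intro v hv
      simp only [Set.mem_insert_iff, Set.mem_singleton_iff] at hv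
      rcases hv with h | h | h | h <;> subst h <;>
        · rw [Metric.mem_closedBall, dist_zero_right,
            pi_norm_le_iff_of_nonneg (by norm_num)]
          intro i
          fin_cases i <;> simp [ha_def, hb_def]
    have := hsub hr
    rwa [Metric.mem_closedBall, dist_zero_right] at this
  constructor
  · intro x
    have hbdd : BddAbove ((fun r => ‖x - r‖) '' R) := by
      refine ⟨‖x‖ + 1, ?_⟩
      rintro _ ⟨r, hr, rfl⟩
      calc ‖x - r‖ ≤ ‖x‖ + ‖r‖ := norm_sub_le _ _
        _ ≤ ‖x‖ + 1 := by linarith [hnorm r hr]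
    have hRHS : (1 : ℝ) ≤ sSup ((fun r => ‖x - r‖) '' R) := by
      -- ‖a - b‖ = 2, so max(‖x-a‖, ‖x-b‖) ≥ 1
      have h2 : (2 : ℝ) ≤ ‖x - a‖ + ‖x - b‖ := by
        have htri : ‖a - b‖ ≤ ‖x - a‖ + ‖x - b‖ := by
          have h := norm_sub_le (a - x) (b - x)
          rw [show a - x - (b - x) = a - b from by abel,
            norm_sub_rev a x, norm_sub_rev b x] at h
          linarith
        have hab : (2 : ℝ) ≤ ‖a - b‖ := by
          have := norm_le_pi_norm (a - b) 0
          have hval : (a - b) 0 = 2 := by simp [ha_def, hb_def]; norm_num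
          rw [hval] at this
          calc (2 : ℝ) = ‖(2 : ℝ)‖ := by rw [Real.norm_eq_abs]; norm_num
            _ ≤ ‖a - b‖ := this
        linarith
      rcases le_or_gt 1 ‖x - a‖ with h | h
      · exact le_csSup_of_le hbdd ⟨a, ha, rfl⟩ h
      · exact le_csSup_of_le hbdd ⟨b, hb, rfl⟩ (by linarith)
    refine le_trans (Real.sSup_le ?_ (by linarith)) hRHS
    rintro _ ⟨r, hr, rfl⟩
    simpa using hnorm r hr
  · -- sum of coordinates is ≥ 1 on R, but equals 0 at origin
    intro h0
    have hlin : IsLinearMap ℝ (fun r : Fin 3 → ℝ => r 0 + r 1 + r 2) := by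
      constructor <;> intros <;> simp [Pi.add_apply, Pi.smul_apply, smul_eq_mul] <;> ring
    have hsub : R ⊆ {r : Fin 3 → ℝ | 1 ≤ r 0 + r 1 + r 2} := by
      rw [hR]
      apply convexHull_min _ (convex_halfSpace_ge hlin 1)
      intro v hv
      simp only [Set.mem_insert_iff, Set.mem_singleton_iff] at hv
      rcases hv with h | h | h | h <;> subst h <;> simp [ha_def, hb_def]
    have := hsub h0
    norm_num at this
end

section
/- Consider a single-state MDP with three actions a₁,a₂,a₃ and horizon H = 1, so a reward is a vector r ∈ ℝ³ and a deterministic policy is a choice of action. Define the planning loss L(r, r') = max_a r'(a) - min_{a ∈ argmax r} r'(a). Let R = {r, r'} with r = (1, 0, 0.5) and r' = (0, 1, 0.5). Then min over rewards r'' of max_{q ∈ R} L(r'', q) equals 0.5, attained by any r'' whose unique maximizer is a₃, while max_{p,q ∈ R} L(p, q) = 1. In particular the Chebyshev center of R under L lies outside R. -/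
/-- The set of maximizing actions of a reward vector. -/
def argmaxSet (r : Fin 3 → ℝ) : Set (Fin 3) := {a | ∀ b, r b ≤ r a}

/-- Planning loss: best value of `r'` minus the worst value under `r'` of an optimal
action for `r`. -/
noncomputable def Lpl (r r' : Fin 3 → ℝ) : ℝ :=
  sSup (Set.range r') - sInf (r' '' argmaxSet r)

/-!
Both rewards have maximum `1` and satisfy `r a + r' a = 1` for every action `a`, so whatever
action `a` a candidate reward `r''` deems optimal, its losses `1 - r a` and `1 - r' a` against
`r` and `r'` add up to at least `1`; the larger is at least `1/2`, with equality exactly when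
`a = a₃`. Each of `r`, `r'` has a unique optimal action, which is the worst one for the other,
so the pairwise losses inside `{r, r'}` are `0` and `1`.
-/

theorem argmaxSet_nonempty (r : Fin 3 → ℝ) : (argmaxSet r).Nonempty :=
  Finite.exists_max r

theorem argmaxSet_eq_singleton_of_forall_lt {r : Fin 3 → ℝ} {a : Fin 3}
    (h : ∀ b ≠ a, r b < r a) : argmaxSet r = {a} := by
  ext b
  refine ⟨fun hb => ?_, fun hb => ?_⟩
  · by_contra hba
    exact (hb a).not_gt (h b hba)
  · rw [hb]
    intro c
    rcases eq_or_ne c a with rfl | hca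
    · exact le_rfl
    · exact (h c hca).le

theorem sSup_range_eq_of_mem_argmaxSet {r : Fin 3 → ℝ} {a : Fin 3} (ha : a ∈ argmaxSet r) :
    sSup (Set.range r) = r a :=
  IsGreatest.csSup_eq ⟨⟨a, rfl⟩, by rintro _ ⟨b, rfl⟩; exact ha b⟩

theorem Lpl_of_argmaxSet_eq_singleton {r : Fin 3 → ℝ} {a : Fin 3} (h : argmaxSet r = {a})
    (q : Fin 3 → ℝ) : Lpl r q = sSup (Set.range q) - q a := by
  rw [Lpl, h, Set.image_singleton, csInf_singleton]

theorem sSup_range_sub_le_Lpl {r : Fin 3 → ℝ} {a : Fin 3} (ha : a ∈ argmaxSet r)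
    (q : Fin 3 → ℝ) : sSup (Set.range q) - q a ≤ Lpl r q :=
  sub_le_sub_left (csInf_le (Set.toFinite _).bddBelow (Set.mem_image_of_mem q ha)) _

local notation "r₁" => (![1, 0, 0.5] : Fin 3 → ℝ)
local notation "r₂" => (![0, 1, 0.5] : Fin 3 → ℝ)

theorem argmaxSet_r₁ : argmaxSet r₁ = {0} :=
  argmaxSet_eq_singleton_of_forall_lt fun b hb => by
    fin_cases b <;> first | exact absurd rfl hb | norm_num

theorem argmaxSet_r₂ : argmaxSet r₂ = {1} :=
  argmaxSet_eq_singleton_of_forall_lt fun b hb => by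
    fin_cases b <;> first | exact absurd rfl hb | norm_num

theorem sSup_range_r₁ : sSup (Set.range r₁) = 1 := by
  rw [sSup_range_eq_of_mem_argmaxSet (argmaxSet_r₁ ▸ rfl : (0 : Fin 3) ∈ argmaxSet r₁)]
  rfl

theorem sSup_range_r₂ : sSup (Set.range r₂) = 1 := by
  rw [sSup_range_eq_of_mem_argmaxSet (argmaxSet_r₂ ▸ rfl : (1 : Fin 3) ∈ argmaxSet r₂)]
  rfl

theorem Lpl_r₁_r₁ : Lpl r₁ r₁ = 0 := by
  rw [Lpl_of_argmaxSet_eq_singleton argmaxSet_r₁, sSup_range_r₁]; norm_num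

theorem Lpl_r₁_r₂ : Lpl r₁ r₂ = 1 := by
  rw [Lpl_of_argmaxSet_eq_singleton argmaxSet_r₁, sSup_range_r₂]; norm_num

theorem Lpl_r₂_r₁ : Lpl r₂ r₁ = 1 := by
  rw [Lpl_of_argmaxSet_eq_singleton argmaxSet_r₂, sSup_range_r₁]; norm_num

theorem Lpl_r₂_r₂ : Lpl r₂ r₂ = 0 := by
  rw [Lpl_of_argmaxSet_eq_singleton argmaxSet_r₂, sSup_range_r₂]; norm_num

theorem half_le_max_Lpl (p : Fin 3 → ℝ) : (0.5 : ℝ) ≤ max (Lpl p r₁) (Lpl p r₂) := by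
  obtain ⟨a, ha⟩ := argmaxSet_nonempty p
  have h₁ := sSup_range_sub_le_Lpl ha r₁
  have h₂ := sSup_range_sub_le_Lpl ha r₂
  have hsum : r₁ a + r₂ a = 1 := by fin_cases a <;> norm_num
  rw [sSup_range_r₁] at h₁
  rw [sSup_range_r₂] at h₂
  have := le_max_left (Lpl p r₁) (Lpl p r₂)
  have := le_max_right (Lpl p r₁) (Lpl p r₂)
  linarith

theorem max_Lpl_of_argmaxSet_eq_two {p : Fin 3 → ℝ} (h : argmaxSet p = {2}) :
    max (Lpl p r₁) (Lpl p r₂) = 0.5 := by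
  rw [Lpl_of_argmaxSet_eq_singleton h, Lpl_of_argmaxSet_eq_singleton h, sSup_range_r₁,
    sSup_range_r₂]
  simp [Matrix.cons_val_two]
  norm_num

theorem sSup_Lpl_pairs : sSup ((fun p : (Fin 3 → ℝ) × (Fin 3 → ℝ) => Lpl p.1 p.2) ''
    (({r₁, r₂} : Set (Fin 3 → ℝ)) ×ˢ ({r₁, r₂} : Set (Fin 3 → ℝ)))) = 1 := by
  refine IsGreatest.csSup_eq ⟨⟨(r₁, r₂), ⟨.inl rfl, .inr rfl⟩, Lpl_r₁_r₂⟩, ?_⟩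
  rintro _ ⟨⟨p, q⟩, ⟨hp | hp, hq | hq⟩, rfl⟩ <;>
    simp only [Set.mem_singleton_iff] at hp hq <;> subst hp hq <;>
    simp [Lpl_r₁_r₁, Lpl_r₁_r₂, Lpl_r₂_r₁, Lpl_r₂_r₂]

/-- With `R = {(1,0,0.5), (0,1,0.5)}`: the minimax value `min_{r''} max_{q ∈ R} L(r'',q)`
equals `0.5`, attained by any `r''` whose unique maximizer is `a₃`; the diameter of `R`
under `L` is `1`; and every element of `R` has worst-case loss strictly above `0.5`,
so the Chebyshev center lies outside `R`. -/
theorem stmt_5 (r r' : Fin 3 → ℝ)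
    (hr : r = ![1, 0, 0.5]) (hr' : r' = ![0, 1, 0.5]) :
    (∀ r'' : Fin 3 → ℝ, (0.5 : ℝ) ≤ max (Lpl r'' r) (Lpl r'' r')) ∧
    (∀ r'' : Fin 3 → ℝ, argmaxSet r'' = {2} →
        max (Lpl r'' r) (Lpl r'' r') = 0.5) ∧
    sSup ((fun p : (Fin 3 → ℝ) × (Fin 3 → ℝ) => Lpl p.1 p.2) ''
        (({r, r'} : Set (Fin 3 → ℝ)) ×ˢ ({r, r'} : Set (Fin 3 → ℝ)))) = 1 ∧
    (∀ c ∈ ({r, r'} : Set (Fin 3 → ℝ)), (0.5 : ℝ) < max (Lpl c r) (Lpl c r')) := by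
  subst hr hr'
  refine ⟨half_le_max_Lpl, fun _ => max_Lpl_of_argmaxSet_eq_two, sSup_Lpl_pairs, ?_⟩
  rintro c (rfl | rfl)
  · rw [Lpl_r₁_r₁, Lpl_r₁_r₂]; norm_num
  · rw [Lpl_r₂_r₁, Lpl_r₂_r₂]; norm_num
end
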